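/- In the 1-planted REM with parameters (μ̂ log M, σ̂ √(log M / 2), M, 1), if 1 < γ = μ̂/σ̂ < 2, then the probability that the planted index is the maximum satisfies P[l̂ = l] = 1 − M^{−(γ−1)² + o(1)} as M → ∞. -/

import Mathlib

/-!
Write `L = log M`, `u = √(2L)` and `γ = μ̂/σ̂`; the planted index fails to be the argmax
when some unbiased weight `N(0, v)`, `v = σ̂²L/2`, exceeds the planted weight `E ~ N(μ̂L, v)`.

Upper bound: given `E = e`, the union bound and the Chernoff bound give failure probability at
most `min 1 (M exp(c²v/2 - ce)) ≤ (M exp(c²v/2 - ce))^θ` for any `θ ∈ [0, 1]`, `c ≥ 0`.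
Averaging this exponential in `e` is a Gaussian moment generating function, and the choice
`θ = γ - 1` (admissible because `1 < γ < 2`), `c = 2/σ̂` gives exactly `1 - P ≤ M^{-(γ-1)²}`.

Lower bound: failure contains `{E < t} ∩ {some unbiased weight > t}`. At `t = σ̂(L - u)` the
second event has probability at least `1/2`, while the Gaussian lower tail bound gives
`P(E < t) ≥ exp(-((γ-1)u + 3)²/2 - 1)`, so `log(1 - P) ≥ -(γ-1)²L - O(√L)`.
-/

open Real Filter MeasureTheory ProbabilityTheory

/-- Probability that the planted weight `E_l ~ N(μ̂ log M, σ̂² log M/2)` is at least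
the maximum of `M` independent unbiased weights `N(0, σ̂² log M/2)` (1-planted REM). -/
noncomputable def premSuccess (μHat σHat : ℝ) (M : ℕ) : ℝ :=
  (((ProbabilityTheory.gaussianReal (μHat * Real.log M)
        (Real.toNNReal (σHat ^ 2 * Real.log M / 2))).prod
      (MeasureTheory.Measure.pi fun _ : Fin M =>
        ProbabilityTheory.gaussianReal 0 (Real.toNNReal (σHat ^ 2 * Real.log M / 2))))
    {p : ℝ × (Fin M → ℝ) | ∀ i : Fin M, p.2 i ≤ p.1}).toReal

open Set
open scoped NNReal Topology

lemma min_one_le_rpow {y θ : ℝ} (hy : 0 ≤ y) (hθ0 : 0 ≤ θ) (hθ1 : θ ≤ 1) :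
    min 1 y ≤ y ^ θ := by
  rcases le_total y 1 with h | h
  · exact (min_le_right _ _).trans (Real.self_le_rpow_of_le_one hy h hθ1)
  · exact (min_le_left _ _).trans (Real.one_le_rpow h hθ0)

lemma one_sub_pow_le_half {q : ℝ} (M : ℕ) (hq1 : q ≤ 1) (hMq : 1 ≤ M * q) :
    (1 - q) ^ M ≤ 1 / 2 :=
  calc (1 - q) ^ M ≤ rexp (-q) ^ M := pow_le_pow_left₀ (by linarith) (one_sub_le_exp_neg q) M
    _ = rexp (-(M * q)) := by rw [← Real.exp_nat_mul]; ring_nf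
    _ ≤ rexp (-1) := Real.exp_le_exp.2 (by linarith)
    _ ≤ 1 / 2 := Real.exp_neg_one_lt_half.le

lemma gaussianReal_real_Ioi_le (m : ℝ) (v : ℝ≥0) {c : ℝ} (hc : 0 ≤ c) (e : ℝ) :
    (gaussianReal m v).real (Ioi e) ≤ rexp (c * m + v * c ^ 2 / 2 - c * e) := by
  have h := measure_ge_le_exp_mul_mgf (X := fun x => x) (μ := gaussianReal m v) e hc
    (integrable_exp_mul_gaussianReal c)
  rw [mgf_fun_id_gaussianReal, ← Real.exp_add] at h
  exact (measureReal_mono Ioi_subset_Ici_self).trans (h.trans_eq (by ring_nf))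

lemma exp_le_gaussianReal_real_Ioi (m : ℝ) {v : ℝ≥0} (hv : v ≠ 0) {s : ℝ} (hs : 0 ≤ s) :
    rexp (-(s + 1) ^ 2 / 2 - 1) ≤ (gaussianReal m v).real (Ioi (m + s * √v)) := by
  set t := m + s * √v
  have hsv : 0 < √(v : ℝ) := Real.sqrt_pos.2 (by positivity)
  have hdens : ∀ x ∈ Ioc t (t + √v), gaussianPDFReal m v (t + √v) ≤ gaussianPDFReal m v x := by
    intro x hx
    simp only [gaussianPDFReal]
    gcongr
    · linarith [hx.1, mul_nonneg hs hsv.le]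
    · exact hx.2
  have hpdf : √(v : ℝ) * gaussianPDFReal m v (t + √v)
      = (√(2 * π))⁻¹ * rexp (-(s + 1) ^ 2 / 2) := by
    have hsq : (t + √v - m) ^ 2 = (s + 1) ^ 2 * v := by
      rw [show t + √v - m = (s + 1) * √v by ring, mul_pow, Real.sq_sqrt v.coe_nonneg]
    simp only [gaussianPDFReal, hsq, Real.sqrt_mul (by positivity : (0:ℝ) ≤ 2 * π)]
    field_simp
  have hpi : √(2 * π) ≤ rexp 1 := by
    rw [Real.sqrt_le_left (by positivity)]
    nlinarith [Real.pi_lt_d2, Real.exp_one_gt_d9]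
  have hint : ∫ x in Ioc t (t + √v), gaussianPDFReal m v (t + √v)
      ≤ ∫ x in Ioc t (t + √v), gaussianPDFReal m v x :=
    setIntegral_mono_on (integrableOn_const measure_Ioc_lt_top.ne)
      (integrable_gaussianPDFReal m v).integrableOn measurableSet_Ioc hdens
  rw [setIntegral_const, measureReal_def, Real.volume_Ioc, add_sub_cancel_left,
    ENNReal.toReal_ofReal hsv.le, smul_eq_mul, hpdf] at hint
  calc rexp (-(s + 1) ^ 2 / 2 - 1) = (rexp 1)⁻¹ * rexp (-(s + 1) ^ 2 / 2) := by
        rw [Real.exp_sub, div_eq_inv_mul]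
    _ ≤ (√(2 * π))⁻¹ * rexp (-(s + 1) ^ 2 / 2) := by gcongr
    _ ≤ (gaussianReal m v).real (Ioc t (t + √v)) := by
        rwa [measureReal_def, gaussianReal_apply_eq_integral m hv, ENNReal.toReal_ofReal
          (setIntegral_nonneg measurableSet_Ioc fun x _ => gaussianPDFReal_nonneg m v x)]
    _ ≤ (gaussianReal m v).real (Ioi t) := measureReal_mono Ioc_subset_Ioi_self

lemma exp_le_gaussianReal_real_Iio (m : ℝ) {v : ℝ≥0} (hv : v ≠ 0) {s : ℝ} (hs : 0 ≤ s) :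
    rexp (-(s + 1) ^ 2 / 2 - 1) ≤ (gaussianReal m v).real (Iio (m - s * √v)) := by
  have h := exp_le_gaussianReal_real_Ioi (-m) hv hs
  have hpre : Neg.neg ⁻¹' Ioi (-m + s * √v) = Iio (m - s * √v) := by
    ext x
    simp only [mem_preimage, mem_Ioi, mem_Iio]
    constructor <;> intro <;> linarith
  rwa [← gaussianReal_map_neg, map_measureReal_apply measurable_neg measurableSet_Ioi, hpre] at h

lemma pi_setOf_exists_lt_le (μ : Measure ℝ) [IsProbabilityMeasure μ] (M : ℕ) (e : ℝ) :
    Measure.pi (fun _ : Fin M => μ) {x | ∃ i, e < x i} ≤ M * μ (Ioi e) :=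
  calc Measure.pi (fun _ : Fin M => μ) {x | ∃ i, e < x i}
      = Measure.pi (fun _ : Fin M => μ) (⋃ i, Function.eval i ⁻¹' Ioi e) := by
        congr 1; ext; simp
    _ ≤ ∑ i, Measure.pi (fun _ : Fin M => μ) (Function.eval i ⁻¹' Ioi e) :=
        measure_iUnion_fintype_le _ _
    _ = M * μ (Ioi e) := by
        simp [(measurePreserving_eval _ _).measure_preimage measurableSet_Ioi.nullMeasurableSet]

lemma pi_real_setOf_exists_lt (μ : Measure ℝ) [IsProbabilityMeasure μ] (M : ℕ) (t : ℝ) :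
    (Measure.pi fun _ : Fin M => μ).real {x | ∃ i, t < x i} = 1 - μ.real (Iic t) ^ M := by
  have h : {x : Fin M → ℝ | ∃ i, t < x i} = (univ.pi fun _ => Iic t)ᶜ := by
    ext; simp only [mem_ofPred_eq, mem_compl_iff, mem_univ_pi, mem_Iic, not_forall, not_le]
  rw [h, probReal_compl_eq_one_sub (MeasurableSet.univ_pi fun _ => measurableSet_Iic),
    measureReal_def, Measure.pi_pi, ENNReal.toReal_prod]
  simp [measureReal_def]

lemma le_prod_pi_real_setOf_exists_lt (ν μ : Measure ℝ) [IsProbabilityMeasure ν]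
    [IsProbabilityMeasure μ] {M : ℕ} {t : ℝ} (h : 1 ≤ M * μ.real (Ioi t)) :
    ν.real (Iio t) / 2
      ≤ (ν.prod (Measure.pi fun _ : Fin M => μ)).real {p | ∃ i, p.1 < p.2 i} := by
  have hhalf : 1 / 2 ≤ (Measure.pi fun _ : Fin M => μ).real {x | ∃ i, t < x i} := by
    rw [pi_real_setOf_exists_lt, ← compl_Ioi, probReal_compl_eq_one_sub measurableSet_Ioi]
    linarith [one_sub_pow_le_half M measureReal_le_one h]
  calc ν.real (Iio t) / 2
      ≤ ν.real (Iio t) * (Measure.pi fun _ : Fin M => μ).real {x | ∃ i, t < x i} := by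
        linarith [mul_le_mul_of_nonneg_left hhalf (measureReal_nonneg (μ := ν) (s := Iio t))]
    _ = (ν.prod (Measure.pi fun _ : Fin M => μ)).real (Iio t ×ˢ {x | ∃ i, t < x i}) :=
        (measureReal_prod_prod _ _).symm
    _ ≤ _ := measureReal_mono <| by rintro ⟨e, x⟩ ⟨he, i, hi⟩; exact ⟨i, lt_trans he hi⟩

noncomputable def plantedREM (m : ℝ) (v : ℝ≥0) (M : ℕ) : Measure (ℝ × (Fin M → ℝ)) :=
  (gaussianReal m v).prod (Measure.pi fun _ : Fin M => gaussianReal 0 v)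

instance (m : ℝ) (v : ℝ≥0) (M : ℕ) : IsProbabilityMeasure (plantedREM m v M) := by
  unfold plantedREM; infer_instance

lemma measurableSet_setOf_exists_lt (M : ℕ) :
    MeasurableSet {p : ℝ × (Fin M → ℝ) | ∃ i, p.1 < p.2 i} := by
  simp only [ofPred_exists]
  exact MeasurableSet.iUnion fun i => measurableSet_lt measurable_fst (by fun_prop)

lemma plantedREM_real_setOf_exists_lt_le (m : ℝ) (v : ℝ≥0) (M : ℕ) {θ c : ℝ}
    (hθ0 : 0 ≤ θ) (hθ1 : θ ≤ 1) (hc : 0 ≤ c) :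
    (plantedREM m v M).real {p | ∃ i, p.1 < p.2 i}
      ≤ (M : ℝ) ^ θ * rexp (θ * ((1 + θ) * v * c ^ 2 / 2 - c * m)) := by
  set K := (M : ℝ) ^ θ * rexp (θ * (v * c ^ 2 / 2))
  have hsection : ∀ e, (Measure.pi fun _ : Fin M => gaussianReal 0 v) {x | ∃ i, e < x i}
      ≤ ENNReal.ofReal (K * rexp (-θ * c * e)) := by
    intro e
    rw [← ENNReal.ofReal_toReal (measure_ne_top _ _), ENNReal.ofReal_le_ofReal_iff (by positivity),
      ← measureReal_def]
    have hunion : (Measure.pi fun _ : Fin M => gaussianReal 0 v).real {x | ∃ i, e < x i}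
        ≤ M * rexp (v * c ^ 2 / 2 - c * e) := by
      refine ENNReal.toReal_le_of_le_ofReal (by positivity)
        ((pi_setOf_exists_lt_le _ M e).trans ?_)
      rw [ENNReal.ofReal_mul (by positivity), ENNReal.ofReal_natCast]
      gcongr
      rw [← ENNReal.ofReal_toReal (measure_ne_top _ _), ← measureReal_def]
      exact ENNReal.ofReal_le_ofReal
        ((gaussianReal_real_Ioi_le 0 v hc e).trans_eq (by rw [mul_zero, zero_add]))
    calc _ ≤ min 1 (M * rexp (v * c ^ 2 / 2 - c * e)) := le_min measureReal_le_one hunion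
      _ ≤ (M * rexp (v * c ^ 2 / 2 - c * e)) ^ θ := min_one_le_rpow (by positivity) hθ0 hθ1
      _ = K * rexp (-θ * c * e) := by
        rw [Real.mul_rpow (by positivity) (by positivity), ← Real.exp_mul, mul_assoc,
          ← Real.exp_add]
        ring_nf
  have hmgf : ∫⁻ e, ENNReal.ofReal (K * rexp (-θ * c * e)) ∂gaussianReal m v
      = ENNReal.ofReal ((M : ℝ) ^ θ * rexp (θ * ((1 + θ) * v * c ^ 2 / 2 - c * m))) := by
    rw [← ofReal_integral_eq_lintegral_ofReal
        ((integrable_exp_mul_gaussianReal _).const_mul K) (ae_of_all _ fun _ => by positivity),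
      integral_const_mul]
    have h := congrFun (mgf_fun_id_gaussianReal (μ := m) (v := v)) (-θ * c)
    rw [mgf] at h
    rw [h, mul_assoc, ← Real.exp_add]
    ring_nf
  refine ENNReal.toReal_le_of_le_ofReal (by positivity) ?_
  rw [plantedREM, Measure.prod_apply (measurableSet_setOf_exists_lt M), ← hmgf]
  exact lintegral_mono fun e => hsection e

lemma one_sub_premSuccess (μHat σHat : ℝ) (M : ℕ) :
    1 - premSuccess μHat σHat M = (plantedREM (μHat * log M)
      (σHat ^ 2 * log M / 2).toNNReal M).real {p | ∃ i, p.1 < p.2 i} := by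
  have h : {p : ℝ × (Fin M → ℝ) | ∃ i, p.1 < p.2 i} = {p | ∀ i, p.2 i ≤ p.1}ᶜ := by
    ext; simp only [mem_ofPred_eq, mem_compl_iff, not_forall, not_le]
  have hS : MeasurableSet {p : ℝ × (Fin M → ℝ) | ∀ i, p.2 i ≤ p.1} := by
    simpa only [h, compl_compl] using (measurableSet_setOf_exists_lt M).compl
  rw [h, probReal_compl_eq_one_sub hS]
  rfl

lemma pos_of_two_le_log {M : ℕ} (hL : 2 ≤ log M) : 0 < M :=
  Nat.pos_of_ne_zero fun h => by simp [h] at hL; linarith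

lemma one_sub_premSuccess_le {μHat σHat : ℝ} (hσ : 0 < σHat) (hγ1 : 1 ≤ μHat / σHat)
    (hγ2 : μHat / σHat ≤ 2) {M : ℕ} (hM : 0 < M) :
    1 - premSuccess μHat σHat M ≤ rexp (-(μHat / σHat - 1) ^ 2 * log M) := by
  have hL : 0 ≤ log M := Real.log_natCast_nonneg M
  set γ := μHat / σHat with hγ
  have hμ : μHat = γ * σHat := by rw [hγ]; field_simp
  rw [one_sub_premSuccess]
  refine (plantedREM_real_setOf_exists_lt_le _ _ M (θ := γ - 1) (c := 2 / σHat)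
    (by linarith) (by linarith) (by positivity)).trans_eq ?_
  rw [Real.coe_toNNReal _ (by positivity), Real.rpow_def_of_pos (by exact_mod_cast hM),
    ← Real.exp_add]
  congr 1
  rw [hμ]
  field_simp
  ring

lemma le_one_sub_premSuccess {μHat σHat : ℝ} (hσ : 0 < σHat) (hγ1 : 1 ≤ μHat / σHat) {M : ℕ}
    (hL : 2 ≤ log M) :
    rexp (-((μHat / σHat - 1) * √(2 * log M) + 3) ^ 2 / 2 - 1) / 2
      ≤ 1 - premSuccess μHat σHat M := by
  set u := √(2 * log M)
  set L := log M
  have hu : 2 ≤ u := Real.le_sqrt_of_sq_le (by linarith)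
  have hu2 : u ^ 2 = 2 * L := Real.sq_sqrt (by positivity)
  set v := (σHat ^ 2 * L / 2).toNNReal
  have hv : (v : ℝ) = (σHat * u / 2) ^ 2 := by
    rw [Real.coe_toNNReal _ (by positivity)]; nlinarith
  have hsv : √(v : ℝ) = σHat * u / 2 := by rw [hv, Real.sqrt_sq (by positivity)]
  have hv0 : v ≠ 0 := by positivity
  rw [one_sub_premSuccess]
  -- `t = σ̂ (L - u)` is low enough that some unbiased weight exceeds it with probability `≥ 1/2`
  refine le_prod_pi_real_setOf_exists_lt (gaussianReal (μHat * L) v) (gaussianReal 0 v)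
    (t := (u - 2) * √v) ?_ |>.trans' ?_
  · have h := exp_le_gaussianReal_real_Ioi 0 hv0 (s := u - 2) (by linarith)
    rw [zero_add] at h
    have hM : (M : ℝ) = rexp (u ^ 2 / 2) := by
      rw [hu2, mul_div_cancel_left₀ _ two_ne_zero, Real.exp_log]
      exact_mod_cast pos_of_two_le_log hL
    calc (1 : ℝ) ≤ rexp (u ^ 2 / 2) * rexp (-(u - 2 + 1) ^ 2 / 2 - 1) := by
          rw [← Real.exp_add]; exact Real.one_le_exp (by nlinarith)
      _ ≤ _ := by rw [hM]; gcongr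
  · have ht : μHat * L - ((μHat / σHat - 1) * u + 2) * √v = (u - 2) * √v := by
      rw [hsv]
      field_simp
      linear_combination -μHat * hu2
    have h := exp_le_gaussianReal_real_Iio (μHat * L) hv0 (s := (μHat / σHat - 1) * u + 2)
      (by nlinarith)
    rw [ht, show (μHat / σHat - 1) * u + 2 + 1 = (μHat / σHat - 1) * u + 3 by ring] at h
    linarith

lemma log_one_sub_premSuccess_div_log_le {μHat σHat : ℝ} (hσ : 0 < σHat)
    (hγ1 : 1 ≤ μHat / σHat) (hγ2 : μHat / σHat ≤ 2) {M : ℕ} (hL : 2 ≤ log M) :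
    log (1 - premSuccess μHat σHat M) / log M ≤ -(μHat / σHat - 1) ^ 2 := by
  have hpos : 0 < 1 - premSuccess μHat σHat M :=
    (le_one_sub_premSuccess hσ hγ1 hL).trans_lt' (by positivity)
  rw [div_le_iff₀ (by linarith), ← Real.log_exp (-(μHat / σHat - 1) ^ 2 * log M)]
  exact Real.log_le_log hpos (one_sub_premSuccess_le hσ hγ1 hγ2 (pos_of_two_le_log hL))

lemma le_log_one_sub_premSuccess_div_log {μHat σHat : ℝ} (hσ : 0 < σHat)
    (hγ1 : 1 ≤ μHat / σHat) {M : ℕ} (hL : 2 ≤ log M) :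
    -(μHat / σHat - 1 + 3 * (√(2 * log M))⁻¹) ^ 2 - 2 * (1 + log 2) * ((√(2 * log M))⁻¹) ^ 2
      ≤ log (1 - premSuccess μHat σHat M) / log M := by
  have h := Real.log_le_log (by positivity) (le_one_sub_premSuccess hσ hγ1 hL)
  rw [Real.log_div (by positivity) two_ne_zero, Real.log_exp] at h
  have hu2 : √(2 * log M) ^ 2 = 2 * log M := Real.sq_sqrt (by linarith)
  have hu : 0 < √(2 * log M) := Real.sqrt_pos.2 (by linarith)
  rw [le_div_iff₀ (by linarith)]
  refine (le_of_eq ?_).trans h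
  field_simp
  rw [hu2]
  ring

theorem stmt7 (μHat σHat : ℝ) (hσ : 0 < σHat)
    (hγ1 : 1 < μHat / σHat) (hγ2 : μHat / σHat < 2) :
    Tendsto (fun M : ℕ => Real.log (1 - premSuccess μHat σHat M) / Real.log M)
      atTop (nhds (-(μHat / σHat - 1) ^ 2)) := by
  have hlog : Tendsto (fun M : ℕ => log M) atTop atTop :=
    tendsto_log_atTop.comp tendsto_natCast_atTop_atTop
  have hw : Tendsto (fun M : ℕ => (√(2 * log M))⁻¹) atTop (𝓝 0) :=
    tendsto_inv_atTop_zero.comp (tendsto_sqrt_atTop.comp (hlog.const_mul_atTop two_pos))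
  have hlower : Tendsto (fun w : ℝ => -(μHat / σHat - 1 + 3 * w) ^ 2 - 2 * (1 + log 2) * w ^ 2)
      (𝓝 0) (𝓝 (-(μHat / σHat - 1) ^ 2)) :=
    (by fun_prop : Continuous fun w : ℝ => -(μHat / σHat - 1 + 3 * w) ^ 2
      - 2 * (1 + log 2) * w ^ 2).tendsto' 0 _ (by ring)
  refine tendsto_of_tendsto_of_tendsto_of_le_of_le' (hlower.comp hw) tendsto_const_nhds ?_ ?_ <;>
    filter_upwards [hlog.eventually_ge_atTop 2] with M hL
  · exact le_log_one_sub_premSuccess_div_log hσ hγ1.le hL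
  · exact log_one_sub_premSuccess_div_log_le hσ hγ1.le hγ2.le hL
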